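/- Let c > 0 and let u ∈ C²(𝒟) satisfy Δu(x) ≥ c e^{2u(x)} for all x ∈ 𝒟 (i.e. the conformal metric e^{2u}δ_{ij} has Gauss curvature K[u] ≤ −c). Then u(x) ≤ log(2/(√c (1 − |x|²))) for all x ∈ 𝒟; that is, the metric is dominated by the complete metric of constant curvature −c on the unit disk. -/

import Mathlib

open Real MeasureTheory Metric Set Filter Topology ENNReal

/-- The plane `ℝ²`. -/
abbrev Plane := EuclideanSpace ℝ (Fin 2)

/-- The Euclidean Laplacian `Δu = ∑ᵢ ∂²u/∂xᵢ²` on `ℝ²`. -/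
noncomputable def laplacian (u : Plane → ℝ) (x : Plane) : ℝ :=
  ∑ i : Fin 2, iteratedFDeriv ℝ 2 u x (fun _ => EuclideanSpace.single i 1)

/-!
For `r < 1`, compare `u` with the conformal factor `V_r` of the complete metric of curvature `-c`
on the disk of radius `r`: it solves `ΔV_r = c e^{2V_r}` and blows up on `|x| = r`, so `u - V_r`
attains its maximum at an interior point `y`. There `Δ(u - V_r) ≤ 0`, hence
`c e^{2u(y)} ≤ Δu(y) ≤ ΔV_r(y) = c e^{2V_r(y)}`, so `u ≤ V_r` on the disk. Let `r → 1`.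
-/

theorem IsLocalMax.deriv_deriv_nonpos {g : ℝ → ℝ} {a : ℝ} (h : IsLocalMax g a)
    (hc : ContinuousAt g a) : deriv (deriv g) a ≤ 0 := by
  by_contra! hpos
  -- `g'' a > 0` makes `a` a local minimum as well, so `g` is constant near `a`
  have hconst : g =ᶠ[𝓝 a] fun _ => g a := by
    filter_upwards [h, isLocalMin_of_deriv_deriv_pos hpos h.deriv_eq_zero hc] with t h₁ h₂
    exact le_antisymm h₁ h₂
  have hderiv : deriv g =ᶠ[𝓝 a] fun _ => 0 := by
    filter_upwards [hconst.eventuallyEq_nhds] with t ht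
    rw [ht.deriv_eq, deriv_const]
  rw [hderiv.deriv_eq, deriv_const] at hpos
  exact hpos.false

section

variable {E F : Type*} [NormedAddCommGroup E] [NormedSpace ℝ E]
  [NormedAddCommGroup F] [NormedSpace ℝ F]

theorem ContDiffAt.deriv_deriv_comp_add_smul {f : E → F} {x : E} (hf : ContDiffAt ℝ 2 f x)
    (v : E) :
    deriv (deriv fun t : ℝ => f (x + t • v)) 0 = iteratedFDeriv ℝ 2 f x (fun _ => v) := by
  have hline (t : ℝ) : HasDerivAt (fun t : ℝ => x + t • v) v t := by
    simpa using ((hasDerivAt_id t).smul_const v).const_add x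
  have hlim : Tendsto (fun t : ℝ => x + t • v) (𝓝 0) (𝓝 x) := by
    simpa using (hline 0).continuousAt.tendsto
  have hderiv : deriv (fun t : ℝ => f (x + t • v)) =ᶠ[𝓝 0]
      fun t => fderiv ℝ f (x + t • v) v := by
    filter_upwards [hlim.eventually (hf.eventually (by simp))] with t ht
    exact ((ht.differentiableAt (by norm_num)).hasFDerivAt.comp_hasDerivAt t (hline t)).deriv
  have hsecond : HasDerivAt (fun t : ℝ => fderiv ℝ f (x + t • v) v)
      (fderiv ℝ (fderiv ℝ f) x v v) 0 := by
    have hf' : DifferentiableAt ℝ (fderiv ℝ f) x :=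
      (hf.fderiv_right (m := 1) (by norm_num)).differentiableAt (by norm_num)
    simpa using (hf'.hasFDerivAt.comp_hasDerivAt_of_eq 0 (hline 0) (by simp)).clm_apply
      (hasDerivAt_const 0 v)
  rw [iteratedFDeriv_two_apply, hderiv.deriv_eq, hsecond.deriv]

theorem IsLocalMax.iteratedFDeriv_two_nonpos {f : E → ℝ} {x : E} (h : IsLocalMax f x)
    (hf : ContDiffAt ℝ 2 f x) (v : E) : iteratedFDeriv ℝ 2 f x (fun _ => v) ≤ 0 := by
  have hline : ContinuousAt (fun t : ℝ => x + t • v) 0 := by fun_prop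
  have hmax : IsLocalMax (fun t : ℝ => f (x + t • v)) 0 :=
    IsLocalMax.comp_continuous (g := fun t : ℝ => x + t • v) (by simpa using h) hline
  rw [← hf.deriv_deriv_comp_add_smul]
  exact hmax.deriv_deriv_nonpos (hf.continuousAt.comp_of_eq hline (by simp))

end

theorem IsLocalMax.laplacian_nonpos {f : Plane → ℝ} {x : Plane} (h : IsLocalMax f x)
    (hf : ContDiffAt ℝ 2 f x) : laplacian f x ≤ 0 :=
  Finset.sum_nonpos fun _ _ => h.iteratedFDeriv_two_nonpos hf _

theorem laplacian_sub {f g : Plane → ℝ} {x : Plane} (hf : ContDiffAt ℝ 2 f x)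
    (hg : ContDiffAt ℝ 2 g x) : laplacian (f - g) x = laplacian f x - laplacian g x := by
  simp only [laplacian, iteratedFDeriv_sub_apply hf hg, sub_apply, Finset.sum_sub_distrib]

/-- `e^{2V}δ` with `V = poincareFactor c r` is the complete metric of curvature `-c` on
`ball 0 r`. -/
noncomputable def poincareFactor (c r : ℝ) (x : Plane) : ℝ :=
  Real.log (2 * r / Real.sqrt c) - Real.log (r ^ 2 - ‖x‖ ^ 2)

theorem contDiffAt_poincareFactor {n : WithTop ℕ∞} (c : ℝ) {r : ℝ} {x : Plane}
    (hx : ‖x‖ < r) :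
    ContDiffAt ℝ n (poincareFactor c r) x := by
  have hpos : r ^ 2 - ‖x‖ ^ 2 ≠ 0 := by nlinarith [norm_nonneg x]
  exact contDiffAt_const.sub ((contDiffAt_const.sub (contDiff_norm_sq ℝ).contDiffAt).log hpos)

theorem EuclideanSpace.norm_add_smul_single_sq {ι : Type*} [Fintype ι] [DecidableEq ι]
    (x : EuclideanSpace ℝ ι) (i : ι) (t : ℝ) :
    ‖x + t • EuclideanSpace.single i 1‖ ^ 2 = ‖x‖ ^ 2 + 2 * x i * t + t ^ 2 := by
  rw [norm_add_sq_real, real_inner_smul_right, EuclideanSpace.inner_single_right, norm_smul,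
    PiLp.norm_single]
  simp only [one_mul, norm_one, mul_one, Real.norm_eq_abs, sq_abs, conj_trivial]
  ring

theorem deriv_deriv_const_sub_log_quadratic (A B a : ℝ) (hB : 0 < B) :
    deriv (deriv fun t : ℝ => A - Real.log (B - 2 * a * t - t ^ 2)) 0
      = (2 * B + 4 * a ^ 2) / B ^ 2 := by
  set q : ℝ → ℝ := fun t => B - 2 * a * t - t ^ 2
  have hq (t : ℝ) : HasDerivAt q (-(2 * a) - 2 * t) t := by
    have := ((hasDerivAt_const t B).sub ((hasDerivAt_id t).const_mul (2 * a))).sub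
      (hasDerivAt_pow 2 t)
    exact this.congr_deriv (by norm_num)
  have hq_pos : ∀ᶠ t in 𝓝 (0 : ℝ), 0 < q t :=
    continuousAt_const.eventually_lt (show Continuous q by fun_prop).continuousAt (by simpa [q])
  have hderiv :
      deriv (fun t => A - Real.log (q t)) =ᶠ[𝓝 0] fun t => (2 * a + 2 * t) / q t := by
    filter_upwards [hq_pos] with t ht
    rw [(((hq t).log ht.ne').const_sub A).deriv]
    ring
  have hsecond : HasDerivAt (fun t => (2 * a + 2 * t) / q t)
      ((2 * q 0 - (2 * a + 2 * 0) * (-(2 * a) - 2 * 0)) / q 0 ^ 2) 0 := by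
    refine HasDerivAt.div ?_ (hq 0) (by simpa [q] using hB.ne')
    simpa using ((hasDerivAt_id (0 : ℝ)).const_mul 2).const_add (2 * a)
  rw [hderiv.deriv_eq, hsecond.deriv]
  simp only [q]
  ring

theorem laplacian_poincareFactor {c r : ℝ} (hc : 0 < c) {x : Plane} (hx : ‖x‖ < r) :
    laplacian (poincareFactor c r) x = c * exp (2 * poincareFactor c r x) := by
  set B := r ^ 2 - ‖x‖ ^ 2
  have hB : 0 < B := by nlinarith [norm_nonneg x]
  have hline (i : Fin 2) : iteratedFDeriv ℝ 2 (poincareFactor c r) x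
      (fun _ => EuclideanSpace.single i 1) = (2 * B + 4 * x i ^ 2) / B ^ 2 := by
    have hrestrict : (fun t : ℝ => poincareFactor c r (x + t • EuclideanSpace.single i 1)) =
        fun t => Real.log (2 * r / Real.sqrt c) - Real.log (B - 2 * x i * t - t ^ 2) := by
      funext t
      rw [poincareFactor, EuclideanSpace.norm_add_smul_single_sq]
      congr 2
      ring
    rw [← (contDiffAt_poincareFactor c hx).deriv_deriv_comp_add_smul, hrestrict,
      deriv_deriv_const_sub_log_quadratic _ _ _ hB]
  have hexp : exp (poincareFactor c r x) = 2 * r / Real.sqrt c / B := by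
    have hr : 0 < r := (norm_nonneg x).trans_lt hx
    rw [poincareFactor, exp_sub, exp_log (by positivity), exp_log hB]
  rw [laplacian, Finset.sum_congr rfl fun i _ => hline i, ← Finset.sum_div,
    Finset.sum_add_distrib, Finset.sum_const, ← Finset.mul_sum,
    ← EuclideanSpace.real_norm_sq_eq, two_mul (poincareFactor c r x), exp_add, hexp]
  field_simp
  rw [Real.sq_sqrt hc.le]
  simp only [B, Finset.card_univ, Fintype.card_fin, nsmul_eq_mul]
  ring

theorem le_poincareFactor_of_isLocalMax {c r : ℝ} (hc : 0 < c) {u : Plane → ℝ} {y : Plane}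
    (hu : ContDiffAt ℝ 2 u y) (hΔ : c * exp (2 * u y) ≤ laplacian u y) (hy : ‖y‖ < r)
    (hmax : IsLocalMax (u - poincareFactor c r) y) : u y ≤ poincareFactor c r y := by
  have hV := contDiffAt_poincareFactor (n := 2) c hy
  have hnonpos := hmax.laplacian_nonpos (hu.sub hV)
  rw [laplacian_sub hu hV, laplacian_poincareFactor hc hy] at hnonpos
  have hexp : exp (2 * u y) ≤ exp (2 * poincareFactor c r y) :=
    le_of_mul_le_mul_left (by linarith) hc
  linarith [exp_le_exp.1 hexp]

theorem exists_isMaxOn_sub_poincareFactor (c : ℝ) {r : ℝ} (hr : 0 < r) {u : Plane → ℝ}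
    (hu : ContinuousOn u (closedBall 0 r)) :
    ∃ y ∈ ball (0 : Plane) r, IsMaxOn (u - poincareFactor c r) (ball 0 r) y := by
  -- `ψ` is a constant multiple of `e^{u - V}` that vanishes on the boundary sphere
  set ψ : Plane → ℝ := fun x => (r ^ 2 - ‖x‖ ^ 2) * exp (u x)
  have hψ_cont : ContinuousOn ψ (closedBall 0 r) := by fun_prop
  obtain ⟨y, hy, hmax⟩ := (isCompact_closedBall (0 : Plane) r).exists_isMaxOn
    ⟨0, mem_closedBall_self hr.le⟩ hψ_cont
  have hψ_pos {x : Plane} (hx : x ∈ ball (0 : Plane) r) : 0 < ψ x := by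
    have : ‖x‖ < r := mem_ball_zero_iff.1 hx
    have : 0 < r ^ 2 - ‖x‖ ^ 2 := by nlinarith [norm_nonneg x]
    positivity
  have hψ_y : 0 < ψ y := (hψ_pos (mem_ball_self hr)).trans_le (hmax (mem_closedBall_self hr.le))
  have hy_ball : y ∈ ball (0 : Plane) r := by
    rw [mem_closedBall_zero_iff] at hy
    rw [mem_ball_zero_iff]
    by_contra! hry
    have : ψ y ≤ 0 := mul_nonpos_of_nonpos_of_nonneg (by nlinarith) (exp_pos _).le
    linarith
  have hlog {x : Plane} (hx : x ∈ ball (0 : Plane) r) :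
      (u - poincareFactor c r) x = Real.log (ψ x) - Real.log (2 * r / Real.sqrt c) := by
    have : 0 < r ^ 2 - ‖x‖ ^ 2 := by nlinarith [norm_nonneg x, mem_ball_zero_iff.1 hx]
    simp only [Pi.sub_apply, poincareFactor, ψ, Real.log_mul this.ne' (exp_pos _).ne', log_exp]
    ring
  refine ⟨y, hy_ball, fun x hx => ?_⟩
  rw [mem_ofPred_eq, hlog hx, hlog hy_ball]
  gcongr
  exacts [hψ_pos hx, hmax (ball_subset_closedBall hx)]

theorem le_poincareFactor {c r : ℝ} (hc : 0 < c) {u : Plane → ℝ}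
    (hu : ContinuousOn u (closedBall 0 r)) (hu₂ : ContDiffOn ℝ 2 u (ball 0 r))
    (hΔ : ∀ y ∈ ball (0 : Plane) r, c * exp (2 * u y) ≤ laplacian u y) {x : Plane}
    (hx : x ∈ ball (0 : Plane) r) : u x ≤ poincareFactor c r x := by
  obtain ⟨y, hy, hmax⟩ :=
    exists_isMaxOn_sub_poincareFactor c ((norm_nonneg x).trans_lt (mem_ball_zero_iff.1 hx)) hu
  have hy_nhds : ball (0 : Plane) r ∈ 𝓝 y := isOpen_ball.mem_nhds hy
  have huy : u y ≤ poincareFactor c r y :=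
    le_poincareFactor_of_isLocalMax hc (hu₂.contDiffAt hy_nhds) (hΔ y hy)
      (mem_ball_zero_iff.1 hy) (hmax.isLocalMax hy_nhds)
  have hxy := hmax hx
  simp only [mem_ofPred_eq, Pi.sub_apply] at hxy
  linarith

theorem poincareFactor_one {c : ℝ} (hc : 0 < c) {x : Plane} (hx : ‖x‖ < 1) :
    poincareFactor c 1 x = Real.log (2 / (Real.sqrt c * (1 - ‖x‖ ^ 2))) := by
  have hB : 0 < 1 - ‖x‖ ^ 2 := by nlinarith [norm_nonneg x]
  have hsqrt : 0 < Real.sqrt c := Real.sqrt_pos.2 hc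
  rw [poincareFactor, one_pow, mul_one, ← Real.log_div (by positivity) hB.ne', div_div]

/-- Yau–Schwarz lemma on the disk: if `u ∈ C²(𝒟)` satisfies `Δu ≥ c e^{2u}`
(i.e. `K[u] ≤ -c`), then the conformal metric `e^{2u}δ` is dominated by the complete metric of
constant curvature `-c` on the unit disk: `u(x) ≤ log(2/(√c (1-|x|²)))`. -/
theorem conformal_factor_upper_bound (c : ℝ) (hc : 0 < c) (u : Plane → ℝ)
    (hu : ContDiffOn ℝ 2 u (ball 0 1))
    (hΔ : ∀ x ∈ ball (0 : Plane) 1, c * exp (2 * u x) ≤ laplacian u x) :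
    ∀ x ∈ ball (0 : Plane) 1,
      u x ≤ Real.log (2 / (Real.sqrt c * (1 - ‖x‖ ^ 2))) := by
  intro x hx
  have hx₁ : ‖x‖ < 1 := mem_ball_zero_iff.1 hx
  have hle : ∀ᶠ r in 𝓝[<] (1 : ℝ), u x ≤ poincareFactor c r x := by
    filter_upwards [Ioo_mem_nhdsLT hx₁] with r ⟨hxr, hr₁⟩
    exact le_poincareFactor hc (hu.continuousOn.mono (closedBall_subset_ball hr₁))
      (hu.mono (ball_subset_ball hr₁.le)) (fun y hy => hΔ y (ball_subset_ball hr₁.le hy))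
      (mem_ball_zero_iff.2 hxr)
  have hcont : ContinuousAt (fun r => poincareFactor c r x) 1 := by
    have hB : 1 ^ 2 - ‖x‖ ^ 2 ≠ 0 := by nlinarith [norm_nonneg x]
    unfold poincareFactor
    fun_prop (disch := first | positivity | exact hB)
  rw [← poincareFactor_one hc hx₁]
  exact ge_of_tendsto hcont.continuousWithinAt hle
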